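/- Fix an integer N ≥ 1, normalized coefficients d₁,…,d_N : (T²)^N → ℂ, δ ∈ (θ/2, 1/2 − θ), and ζ ∈ ℤ². For k ≥ 1 set L₀ = n_k^δ, choose ξ₀^{(k)} ∈ ℤ² with 4π²|ξ₀^{(k)}|² = n_{k−1}, write d(x,ξ) = Σ_{j=1}^N d_j(x) e_ξ(−x_j), and define on (T²)^N the random variables 𝒜_ζ^{(k)}(x) = Σ_{ξ ∈ A(n_k,L₀), 4π²|ξ+ζ|² < n_k} (4π²|ξ+ζ|² − n_k)^{−2} |d(x,ξ)|² + Σ_{ξ ∈ A(n_k,L₀), 4π²|ξ+ζ|² > n_{k+1}} (4π²|ξ+ζ|² − n_{k+1})^{−2} |d(x,ξ)|², and ℬ^{(k)}(x) = (n_{k+1} − n_{k−1})^{−2} |d(x, ξ₀^{(k)})|², and set Σ(ζ, n_k) = Σ_{ξ ∈ A(n_k,L₀), 4π²|ξ+ζ|² < n_k} (4π²|ξ+ζ|² − n_k)^{−2} + Σ_{ξ ∈ A(n_k,L₀), 4π²|ξ+ζ|² > n_{k+1}} (4π²|ξ+ζ|² − n_{k+1})^{−2}. Then, as k → ∞, E[𝒜_ζ^{(k)}]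 = (1 + o(1)) · Σ(ζ, n_k) and E[ℬ^{(k)}] = (1 + o(1)) · (n_{k+1} − n_{k−1})^{−2}; in particular, whenever Σ(ζ, n_k) > 0 for all large k, E[𝒜_ζ^{(k)}]/E[ℬ^{(k)}] ∼ (n_{k+1} − n_{k−1})² · Σ(ζ, n_k). -/

import Mathlib

open Real MeasureTheory Filter Finset

noncomputable section

instance : Fact ((0:ℝ) < 1) := ⟨one_pos⟩

/-- The standard torus `ℝ²/ℤ²`. -/
abbrev T2 := Fin 2 → AddCircle (1:ℝ)

/-- `m` is a sum of two integer squares. -/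
def IsSum2Sq (m : ℕ) : Prop := ∃ a b : ℤ, (m : ℤ) = a ^ 2 + b ^ 2

/-- The increasing enumeration `n₀ < n₁ < ⋯` of `S = {4π²m : m a sum of two squares}`. -/
noncomputable def nseq (k : ℕ) : ℝ := 4 * Real.pi ^ 2 * (Nat.nth IsSum2Sq k)

/-- The character `e_ξ(x) = exp(2πi⟨ξ,x⟩)` on the torus. -/
noncomputable def eChar (ξ : Fin 2 → ℤ) (y : T2) : ℂ :=
  ∏ i, fourier (ξ i) (y i)

/-- Huxley's exponent in the circle law. -/
noncomputable def θH : ℝ := 133 / 416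

/-- `4π²|ξ|²`. -/
noncomputable def qf (ξ : Fin 2 → ℤ) : ℝ := 4 * Real.pi ^ 2 * ∑ i, (ξ i : ℝ) ^ 2

/-- `d(x,ξ) = Σ_j d_j(x) e_ξ(−x_j)`. -/
noncomputable def dsum {N : ℕ} (dd : Fin N → ((Fin N → T2) → ℂ))
    (x : Fin N → T2) (ξ : Fin 2 → ℤ) : ℂ :=
  ∑ j, dd j x * eChar ξ (-(x j))

/-- The deterministic lattice sum `Σ(ζ, n_k)`. -/
noncomputable def SigmaSum (ζ : Fin 2 → ℤ) (nk nk1 L0 : ℝ) : ℝ :=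
  (∑' ξ : Fin 2 → ℤ,
      if |qf ξ - nk| ≤ L0 ∧ qf (ξ + ζ) < nk then ((qf (ξ + ζ) - nk) ^ 2)⁻¹ else 0)
  + ∑' ξ : Fin 2 → ℤ,
      if |qf ξ - nk| ≤ L0 ∧ nk1 < qf (ξ + ζ) then ((qf (ξ + ζ) - nk1) ^ 2)⁻¹ else 0

/-- The random variable `𝒜_ζ^{(k)}`. -/
noncomputable def Afun {N : ℕ} (dd : Fin N → ((Fin N → T2) → ℂ)) (ζ : Fin 2 → ℤ)
    (nk nk1 L0 : ℝ) (x : Fin N → T2) : ℝ :=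
  (∑' ξ : Fin 2 → ℤ,
      if |qf ξ - nk| ≤ L0 ∧ qf (ξ + ζ) < nk then
        ((qf (ξ + ζ) - nk) ^ 2)⁻¹ * ‖dsum dd x ξ‖ ^ 2 else 0)
  + ∑' ξ : Fin 2 → ℤ,
      if |qf ξ - nk| ≤ L0 ∧ nk1 < qf (ξ + ζ) then
        ((qf (ξ + ζ) - nk1) ^ 2)⁻¹ * ‖dsum dd x ξ‖ ^ 2 else 0

/-- The random variable `ℬ^{(k)}`. -/
noncomputable def Bfun {N : ℕ} (dd : Fin N → ((Fin N → T2) → ℂ)) (ξ₀ : Fin 2 → ℤ)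
    (nk1 nkm1 : ℝ) (x : Fin N → T2) : ℝ :=
  ((nk1 - nkm1) ^ 2)⁻¹ * ‖dsum dd x ξ₀‖ ^ 2


/-!
Expanding `|d(x,ξ)|² = Σ_{j,l} d_j(x) conj(d_l(x)) e_ξ(x_l − x_j)`, the diagonal terms have total
expectation `E Σ_j |d_j|² = 1`, while for `j ≠ l` the characters `x ↦ e_ξ(x_j − x_l)` are
orthonormal in `L²((T²)^N)`, so by Bessel's inequality the off-diagonal expectations tend to `0`
as `|ξ| → ∞`. Hence `E|d(·,ξ)|² → 1`. Now `E 𝒜_ζ^{(k)}` and `Σ(ζ, n_k)` are sums over the finite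
annulus `A(n_k, L₀)` with the same nonnegative weights, against `E|d(·,ξ)|²` and `1` respectively,
and `E ℬ^{(k)} = (n_{k+1} − n_{k−1})^{−2} E|d(·,ξ₀^{(k)})|²`. Every frequency involved satisfies
`4π²|ξ|² ≥ min(n_k − n_k^δ, n_{k−1}) → ∞` (as `δ < 1`), so both relative errors are bounded by the
supremum of `|E|d(·,ξ)|² − 1|` over that range of `ξ`, which tends to `0`.
-/

open ComplexConjugate UnitAddTorus

lemma volume_addCircle_one :
    (volume : Measure (AddCircle (1 : ℝ))) = AddCircle.haarAddCircle := by
  rw [AddCircle.volume_eq_smul_haarAddCircle, ENNReal.ofReal_one, one_smul]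

instance : IsProbabilityMeasure (volume : Measure (AddCircle (1 : ℝ))) := by
  rw [volume_addCircle_one]; infer_instance

lemma integral_fourier_addCircle_one (n : ℤ) :
    ∫ y : AddCircle (1 : ℝ), fourier n y = if n = 0 then 1 else 0 := by
  have h := congr_fun (fourierCoeff_fourier (T := 1) n) 0
  simp only [fourierCoeff, neg_zero, fourier_zero, one_smul, ← volume_addCircle_one] at h
  simp only [h, Pi.single_apply, eq_comm]

lemma eChar_eq_mFourier (ξ : Fin 2 → ℤ) : eChar ξ = mFourier ξ := rfl

@[fun_prop]
lemma continuous_eChar (ξ : Fin 2 → ℤ) : Continuous (eChar ξ) := (mFourier ξ).continuous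

lemma norm_eChar (ξ : Fin 2 → ℤ) (y : T2) : ‖eChar ξ y‖ = 1 := by
  rw [eChar, norm_prod]
  exact Finset.prod_eq_one fun i _ => by rw [fourier_apply, Circle.norm_coe]

lemma eChar_neg_arg (ξ : Fin 2 → ℤ) (y : T2) : eChar ξ (-y) = conj (eChar ξ y) := by
  rw [eChar, eChar, map_prod]
  refine Finset.prod_congr rfl fun i _ => ?_
  rw [Pi.neg_apply, fourier_apply, smul_neg, ← neg_smul, ← fourier_apply, fourier_neg]

lemma integral_eChar (ξ : Fin 2 → ℤ) : ∫ y : T2, eChar ξ y = if ξ = 0 then 1 else 0 := by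
  simp only [eChar]
  rw [volume_pi, integral_fintype_prod_eq_prod (f := fun i z => fourier (ξ i) z)]
  simp only [integral_fourier_addCircle_one, Finset.prod_boole, Finset.mem_univ, true_implies,
    funext_iff, Pi.zero_apply]

lemma integral_prod_eChar {N : ℕ} (n : Fin N → Fin 2 → ℤ) :
    ∫ x : Fin N → T2, ∏ m, eChar (n m) (x m) = if n = 0 then 1 else 0 := by
  rw [volume_pi, integral_fintype_prod_eq_prod (f := fun m => eChar (n m))]
  simp only [integral_eChar, Finset.prod_boole, Finset.mem_univ, true_implies, funext_iff,
    Pi.zero_apply]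

lemma integral_eChar_mul_eChar {N : ℕ} {j l : Fin N} (hjl : j ≠ l) (μ ν : Fin 2 → ℤ) :
    ∫ x : Fin N → T2, eChar μ (x j) * eChar ν (x l) = if μ = 0 ∧ ν = 0 then 1 else 0 := by
  classical
  set n : Fin N → Fin 2 → ℤ := Pi.single j μ + Pi.single l ν
  have hprod : ∀ x : Fin N → T2, eChar μ (x j) * eChar ν (x l) = ∏ m, eChar (n m) (x m) :=
    fun x => by
      rw [Finset.prod_eq_mul j l hjl (fun m _ hm => by
        simp [n, hm.1, hm.2, eChar_eq_mFourier, mFourier_zero]) (by simp) (by simp)]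
      simp [n, hjl, hjl.symm]
  have hn : n = 0 ↔ μ = 0 ∧ ν = 0 :=
    ⟨fun h => ⟨by simpa [n, hjl.symm] using congr_fun h j, by simpa [n, hjl] using congr_fun h l⟩,
      by rintro ⟨rfl, rfl⟩; simp [n]⟩
  simp_rw [hprod, integral_prod_eChar, hn]

theorem Orthonormal.tendsto_inner_cofinite {ι 𝕜 E : Type*} [RCLike 𝕜] [NormedAddCommGroup E]
    [InnerProductSpace 𝕜 E] {v : ι → E} (hv : Orthonormal 𝕜 v) (x : E) :
    Tendsto (fun i => inner 𝕜 (v i) x) cofinite (nhds 0) := by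
  have h := (hv.inner_products_summable x).tendsto_cofinite_zero.sqrt
  simp only [Real.sqrt_sq (norm_nonneg _), Real.sqrt_zero] at h
  exact tendsto_zero_iff_norm_tendsto_zero.mpr h

lemma MeasureTheory.MemLp.inner_toLp {α : Type*} [MeasurableSpace α] {μ : Measure α}
    {f g : α → ℂ} (hf : MemLp f 2 μ) (hg : MemLp g 2 μ) :
    inner ℂ (hf.toLp f) (hg.toLp g) = ∫ x, conj (f x) * g x ∂μ := by
  rw [L2.inner_def]
  refine integral_congr_ae ?_
  filter_upwards [hf.coeFn_toLp, hg.coeFn_toLp] with x hfx hgx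
  rw [hfx, hgx, RCLike.inner_apply']

theorem tendsto_integral_conj_mul_cofinite {α ι : Type*} [DecidableEq ι] [MeasurableSpace α]
    {μ : Measure α} {Φ : ι → α → ℂ} (hΦ : ∀ i, MemLp (Φ i) 2 μ)
    (horth : ∀ i i', ∫ x, conj (Φ i x) * Φ i' x ∂μ = if i = i' then 1 else 0)
    {G : α → ℂ} (hG : MemLp G 2 μ) :
    Tendsto (fun i => ∫ x, conj (Φ i x) * G x ∂μ) cofinite (nhds 0) := by
  have hv : Orthonormal ℂ fun i => (hΦ i).toLp (Φ i) :=
    orthonormal_iff_ite.2 fun i i' => by rw [MemLp.inner_toLp, horth]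
  simpa only [MemLp.inner_toLp] using hv.tendsto_inner_cofinite (hG.toLp G)

section CrossCharacters

variable {N : ℕ}

/-- `e_ξ(x_j − x_l)`. -/
def crossChar (j l : Fin N) (ξ : Fin 2 → ℤ) (x : Fin N → T2) : ℂ :=
  eChar ξ (x j) * conj (eChar ξ (x l))

lemma norm_crossChar (j l : Fin N) (ξ : Fin 2 → ℤ) (x : Fin N → T2) :
    ‖crossChar j l ξ x‖ = 1 := by
  rw [crossChar, norm_mul, RCLike.norm_conj, norm_eChar, norm_eChar, one_mul]

lemma crossChar_self (j : Fin N) (ξ : Fin 2 → ℤ) (x : Fin N → T2) : crossChar j j ξ x = 1 := by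
  rw [crossChar, Complex.mul_conj', norm_eChar]; simp

lemma memLp_crossChar (j l : Fin N) (ξ : Fin 2 → ℤ) :
    MemLp (crossChar j l ξ) 2 (volume : Measure (Fin N → T2)) :=
  .of_bound (by unfold crossChar; fun_prop) 1
    (ae_of_all _ fun x => (norm_crossChar j l ξ x).le)

lemma integral_conj_crossChar_mul_crossChar {j l : Fin N} (hjl : j ≠ l) (ξ ξ' : Fin 2 → ℤ) :
    ∫ x, conj (crossChar j l ξ x) * crossChar j l ξ' x = if ξ = ξ' then 1 else 0 := by
  have h : ∀ x : Fin N → T2, conj (crossChar j l ξ x) * crossChar j l ξ' x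
      = eChar (ξ' - ξ) (x j) * eChar (ξ - ξ') (x l) := fun x => by
    simp only [crossChar, eChar_eq_mFourier, map_mul, ← mFourier_neg, neg_neg, sub_eq_add_neg,
      mFourier_add]
    ring
  simp_rw [h, integral_eChar_mul_eChar hjl, sub_eq_zero]
  grind

end CrossCharacters

section NormalizedCoefficients

variable {N : ℕ} {dd : Fin N → (Fin N → T2) → ℂ}

lemma norm_le_one_of_sum_norm_sq_eq_one (hnorm : ∀ x, ∑ j, ‖dd j x‖ ^ 2 = 1) (j : Fin N)
    (x : Fin N → T2) : ‖dd j x‖ ≤ 1 := by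
  have h : ‖dd j x‖ ^ 2 ≤ 1 :=
    hnorm x ▸ Finset.single_le_sum (f := fun i => ‖dd i x‖ ^ 2) (fun _ _ => by positivity)
      (Finset.mem_univ j)
  exact (sq_le_one_iff₀ (norm_nonneg _)).mp h

lemma norm_dsum_le (hnorm : ∀ x, ∑ j, ‖dd j x‖ ^ 2 = 1) (x : Fin N → T2) (ξ : Fin 2 → ℤ) :
    ‖dsum dd x ξ‖ ≤ N := by
  calc ‖dsum dd x ξ‖ ≤ ∑ j, ‖dd j x * eChar ξ (-(x j))‖ := norm_sum_le _ _
    _ ≤ ∑ _j : Fin N, (1 : ℝ) := Finset.sum_le_sum fun j _ => by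
        rw [norm_mul, norm_eChar, mul_one]; exact norm_le_one_of_sum_norm_sq_eq_one hnorm j x
    _ = N := by simp

lemma integrable_norm_dsum_sq (hmeas : ∀ j, Measurable (dd j))
    (hnorm : ∀ x, ∑ j, ‖dd j x‖ ^ 2 = 1) (ξ : Fin 2 → ℤ) :
    Integrable fun x : Fin N → T2 => ‖dsum dd x ξ‖ ^ 2 := by
  have hm : Measurable fun x => dsum dd x ξ := Finset.measurable_sum _ fun j _ => by fun_prop
  refine .of_bound (by fun_prop) ((N : ℝ) ^ 2) (ae_of_all _ fun x => ?_)
  rw [Real.norm_of_nonneg (by positivity)]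
  exact pow_le_pow_left₀ (norm_nonneg _) (norm_dsum_le hnorm x ξ) 2

lemma memLp_mul_conj (hmeas : ∀ j, Measurable (dd j))
    (hnorm : ∀ x, ∑ j, ‖dd j x‖ ^ 2 = 1) (j l : Fin N) :
    MemLp (fun x => dd j x * conj (dd l x)) 2 := by
  refine .of_bound (by fun_prop) 1 (ae_of_all _ fun x => ?_)
  rw [norm_mul, RCLike.norm_conj]
  exact mul_le_one₀ (norm_le_one_of_sum_norm_sq_eq_one hnorm j x) (norm_nonneg _)
    (norm_le_one_of_sum_norm_sq_eq_one hnorm l x)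

lemma integrable_conj_crossChar_mul (hmeas : ∀ j, Measurable (dd j))
    (hnorm : ∀ x, ∑ j, ‖dd j x‖ ^ 2 = 1) (j l : Fin N) (ξ : Fin 2 → ℤ) :
    Integrable fun x => conj (crossChar j l ξ x) * (dd j x * conj (dd l x)) :=
  ((memLp_mul_conj hmeas hnorm j l).integrable one_le_two).bdd_mul
    (by unfold crossChar; fun_prop)
    (ae_of_all _ fun x => (RCLike.norm_conj _).trans_le (norm_crossChar j l ξ x).le)

lemma ofReal_norm_dsum_sq (x : Fin N → T2) (ξ : Fin 2 → ℤ) :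
    ((‖dsum dd x ξ‖ ^ 2 : ℝ) : ℂ)
      = ∑ j, ∑ l, conj (crossChar j l ξ x) * (dd j x * conj (dd l x)) := by
  rw [Complex.ofReal_pow, ← Complex.mul_conj', dsum, map_sum, Finset.sum_mul_sum]
  refine Finset.sum_congr rfl fun j _ => Finset.sum_congr rfl fun l _ => ?_
  simp only [crossChar, eChar_neg_arg, map_mul, RCLike.conj_conj]
  ring

variable (dd) in
def dsumMeanSq (ξ : Fin 2 → ℤ) : ℝ := ∫ x, ‖dsum dd x ξ‖ ^ 2

lemma ofReal_dsumMeanSq (hmeas : ∀ j, Measurable (dd j)) (hnorm : ∀ x, ∑ j, ‖dd j x‖ ^ 2 = 1)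
    (ξ : Fin 2 → ℤ) : (dsumMeanSq dd ξ : ℂ)
      = ∑ j, ∑ l, ∫ x, conj (crossChar j l ξ x) * (dd j x * conj (dd l x)) := by
  have hint := integrable_conj_crossChar_mul hmeas hnorm (ξ := ξ)
  rw [dsumMeanSq, ← integral_complex_ofReal]
  simp_rw [ofReal_norm_dsum_sq]
  rw [integral_finsetSum _ fun j _ => integrable_finsetSum _ fun l _ => hint j l]
  exact Finset.sum_congr rfl fun j _ => integral_finsetSum _ fun l _ => hint j l

theorem tendsto_dsumMeanSq (hmeas : ∀ j, Measurable (dd j))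
    (hnorm : ∀ x, ∑ j, ‖dd j x‖ ^ 2 = 1) : Tendsto (dsumMeanSq dd) cofinite (nhds 1) := by
  have hterm : ∀ j l, Tendsto (fun ξ => ∫ x, conj (crossChar j l ξ x) * (dd j x * conj (dd l x)))
      cofinite (nhds (if j = l then ∫ x, dd j x * conj (dd j x) else 0)) := by
    intro j l
    split_ifs with hjl
    · subst hjl
      simp only [crossChar_self, map_one, one_mul]
      exact tendsto_const_nhds
    · exact tendsto_integral_conj_mul_cofinite (memLp_crossChar j l)
        (integral_conj_crossChar_mul_crossChar hjl) (memLp_mul_conj hmeas hnorm j l)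
  have hdiag : ∑ j, ∑ l, (if j = l then ∫ x, dd j x * conj (dd j x) else 0) = 1 := by
    simp only [Finset.sum_ite_eq, Finset.mem_univ, if_true]
    rw [← integral_finsetSum _ fun j _ => (memLp_mul_conj hmeas hnorm j j).integrable one_le_two]
    simp only [Complex.mul_conj', ← Complex.ofReal_pow, ← Complex.ofReal_sum, hnorm]
    simp
  rw [← Filter.tendsto_ofReal_iff, Complex.ofReal_one, ← hdiag]
  simp_rw [ofReal_dsumMeanSq hmeas hnorm]
  exact tendsto_finsetSum _ fun j _ => tendsto_finsetSum _ fun l _ => hterm j l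

end NormalizedCoefficients

section TailSup

variable {ι : Type*} {f : ι → ℝ}

def tailSup (f q : ι → ℝ) (t : ℝ) : ℝ := ⨆ i : {i // t ≤ q i}, |f i|

lemma abs_le_tailSup (hf : Tendsto f cofinite (nhds 0)) (q : ι → ℝ) {t : ℝ} {i : ι}
    (hi : t ≤ q i) : |f i| ≤ tailSup f q t := by
  have hbdd : BddAbove (Set.range fun i => |f i|) :=
    (by simpa using hf.abs : Tendsto (fun i => |f i|) cofinite (nhds 0)).bddAbove_range_of_cofinite
  exact le_ciSup (f := fun i : {i // t ≤ q i} => |f i|)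
    (hbdd.mono (Set.range_subset_iff.2 fun i => Set.mem_range_self i.1)) ⟨i, hi⟩

theorem tendsto_tailSup_atTop (hf : Tendsto f cofinite (nhds 0)) (q : ι → ℝ) :
    Tendsto (tailSup f q) atTop (nhds 0) := by
  refine tendsto_order.2 ⟨fun a ha => Eventually.of_forall fun t =>
    ha.trans_le (Real.iSup_nonneg fun _ => abs_nonneg _), fun ε hε => ?_⟩
  have hfin : {i | ¬ |f i| < ε / 2}.Finite := by
    simpa [Real.dist_eq] using Filter.eventually_cofinite.1
      (Metric.tendsto_nhds.1 hf (ε / 2) (half_pos hε))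
  obtain ⟨M, hM⟩ := (hfin.image q).bddAbove
  filter_upwards [eventually_gt_atTop M] with t ht
  refine (Real.iSup_le (fun i => ?_) (half_pos hε).le).trans_lt (half_lt_self hε)
  by_contra hi
  exact (ht.trans_le i.2).not_ge (hM (Set.mem_image_of_mem q (not_lt.2 (not_le.1 hi).le)))

end TailSup

lemma sq_le_qf (ξ : Fin 2 → ℤ) (i : Fin 2) : (ξ i : ℝ) ^ 2 ≤ qf ξ :=
  calc (ξ i : ℝ) ^ 2 ≤ ∑ i, (ξ i : ℝ) ^ 2 :=
        Finset.single_le_sum (f := fun i => (ξ i : ℝ) ^ 2) (fun _ _ => sq_nonneg _)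
          (Finset.mem_univ i)
    _ ≤ qf ξ := le_mul_of_one_le_left (Finset.sum_nonneg fun _ _ => sq_nonneg _)
        (by nlinarith [Real.pi_gt_three])

lemma finite_setOf_qf_le (t : ℝ) : {ξ | qf ξ ≤ t}.Finite := by
  refine (Set.finite_Icc (-fun _ => ⌈t⌉) fun _ => ⌈t⌉).subset fun ξ hξ => ?_
  have habs : ∀ i, |ξ i| ≤ ⌈t⌉ := fun i =>
    (Int.natCast_natAbs (ξ i) ▸ Int.natAbs_le_self_sq (ξ i)).trans
      (by exact_mod_cast (sq_le_qf ξ i).trans (hξ.trans (Int.le_ceil t)))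
  exact ⟨fun i => (abs_le.1 (habs i)).1, fun i => (abs_le.1 (habs i)).2⟩

def annulus (n L : ℝ) : Set (Fin 2 → ℤ) := {ξ | |qf ξ - n| ≤ L}

lemma mem_annulus {n L : ℝ} {ξ : Fin 2 → ℤ} : ξ ∈ annulus n L ↔ |qf ξ - n| ≤ L := Iff.rfl

lemma annulus_finite (n L : ℝ) : (annulus n L).Finite :=
  (finite_setOf_qf_le (n + L)).subset fun ξ (hξ : |qf ξ - n| ≤ L) =>
    show qf ξ ≤ n + L by linarith [(abs_le.1 hξ).2]

lemma tsum_ite_annulus_eq_sum {n L : ℝ} {p : (Fin 2 → ℤ) → Prop} [DecidablePred p]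
    (g : (Fin 2 → ℤ) → ℝ) :
    ∑' ξ, (if |qf ξ - n| ≤ L ∧ p ξ then g ξ else 0)
      = ∑ ξ ∈ (annulus_finite n L).toFinset, if |qf ξ - n| ≤ L ∧ p ξ then g ξ else 0 :=
  tsum_eq_sum fun _ hξ => if_neg fun h => hξ ((annulus_finite n L).mem_toFinset.2 h.1)

def sigmaWeight (ζ : Fin 2 → ℤ) (nk nk1 L0 : ℝ) (ξ : Fin 2 → ℤ) : ℝ :=
  (if |qf ξ - nk| ≤ L0 ∧ qf (ξ + ζ) < nk then ((qf (ξ + ζ) - nk) ^ 2)⁻¹ else 0)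
  + if |qf ξ - nk| ≤ L0 ∧ nk1 < qf (ξ + ζ) then ((qf (ξ + ζ) - nk1) ^ 2)⁻¹ else 0

lemma sigmaWeight_nonneg (ζ : Fin 2 → ℤ) (nk nk1 L0 : ℝ) (ξ : Fin 2 → ℤ) :
    0 ≤ sigmaWeight ζ nk nk1 L0 ξ := by
  unfold sigmaWeight; split_ifs <;> positivity

lemma sigmaSum_eq_sum (ζ : Fin 2 → ℤ) (nk nk1 L0 : ℝ) :
    SigmaSum ζ nk nk1 L0
      = ∑ ξ ∈ (annulus_finite nk L0).toFinset, sigmaWeight ζ nk nk1 L0 ξ := by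
  rw [SigmaSum, tsum_ite_annulus_eq_sum, tsum_ite_annulus_eq_sum, ← Finset.sum_add_distrib]
  rfl

lemma afun_eq_sum {N : ℕ} (dd : Fin N → (Fin N → T2) → ℂ) (ζ : Fin 2 → ℤ) (nk nk1 L0 : ℝ)
    (x : Fin N → T2) : Afun dd ζ nk nk1 L0 x
      = ∑ ξ ∈ (annulus_finite nk L0).toFinset, sigmaWeight ζ nk nk1 L0 ξ * ‖dsum dd x ξ‖ ^ 2 := by
  rw [Afun, tsum_ite_annulus_eq_sum, tsum_ite_annulus_eq_sum, ← Finset.sum_add_distrib]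
  simp only [sigmaWeight, add_mul, ite_mul, zero_mul]

lemma abs_mul_sub_le {w I η : ℝ} (hw : 0 ≤ w) (hI : |I - 1| ≤ η) : |w * I - w| ≤ η * w := by
  rw [← mul_sub_one, abs_mul, abs_of_nonneg hw, mul_comm]
  exact mul_le_mul_of_nonneg_right hI hw

lemma abs_sum_mul_sub_sum_le {ι : Type*} (s : Finset ι) {w I : ι → ℝ} {η : ℝ}
    (hw : ∀ i ∈ s, 0 ≤ w i) (hI : ∀ i ∈ s, |I i - 1| ≤ η) :
    |∑ i ∈ s, w i * I i - ∑ i ∈ s, w i| ≤ η * ∑ i ∈ s, w i := by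
  rw [← Finset.sum_sub_distrib, Finset.mul_sum]
  exact (Finset.abs_sum_le_sum_abs _ _).trans
    (Finset.sum_le_sum fun i hi => abs_mul_sub_le (hw i hi) (hI i hi))

section Expectations

variable {N : ℕ} {dd : Fin N → (Fin N → T2) → ℂ}

lemma integral_afun (hmeas : ∀ j, Measurable (dd j)) (hnorm : ∀ x, ∑ j, ‖dd j x‖ ^ 2 = 1)
    (ζ : Fin 2 → ℤ) (nk nk1 L0 : ℝ) : ∫ x, Afun dd ζ nk nk1 L0 x
      = ∑ ξ ∈ (annulus_finite nk L0).toFinset, sigmaWeight ζ nk nk1 L0 ξ * dsumMeanSq dd ξ := by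
  simp_rw [afun_eq_sum]
  rw [integral_finsetSum _ fun ξ _ => (integrable_norm_dsum_sq hmeas hnorm ξ).const_mul _]
  simp_rw [integral_const_mul, dsumMeanSq]

theorem abs_integral_afun_sub_sigmaSum_le (hmeas : ∀ j, Measurable (dd j))
    (hnorm : ∀ x, ∑ j, ‖dd j x‖ ^ 2 = 1) (ζ : Fin 2 → ℤ) {nk nk1 L0 η : ℝ}
    (hη : ∀ ξ ∈ annulus nk L0, |dsumMeanSq dd ξ - 1| ≤ η) :
    |(∫ x, Afun dd ζ nk nk1 L0 x) - SigmaSum ζ nk nk1 L0| ≤ η * SigmaSum ζ nk nk1 L0 := by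
  rw [integral_afun hmeas hnorm, sigmaSum_eq_sum]
  exact abs_sum_mul_sub_sum_le _ (fun ξ _ => sigmaWeight_nonneg ζ nk nk1 L0 ξ)
    fun ξ hξ => hη ξ ((annulus_finite nk L0).mem_toFinset.1 hξ)

theorem abs_integral_bfun_sub_le {ξ₀ : Fin 2 → ℤ} {nk1 nkm1 η : ℝ}
    (hη : |dsumMeanSq dd ξ₀ - 1| ≤ η) :
    |(∫ x, Bfun dd ξ₀ nk1 nkm1 x) - ((nk1 - nkm1) ^ 2)⁻¹| ≤ η * ((nk1 - nkm1) ^ 2)⁻¹ := by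
  simp only [Bfun, integral_const_mul]
  exact abs_mul_sub_le (by positivity) hη

end Expectations

lemma strictMono_nth_isSum2Sq : StrictMono (Nat.nth IsSum2Sq) :=
  Nat.nth_strictMono <| Set.infinite_of_injective_forall_mem
    (Nat.pow_left_injective two_ne_zero) fun n => ⟨n, 0, by push_cast; ring⟩

lemma nseq_strictMono : StrictMono nseq := fun _ _ hab =>
  mul_lt_mul_of_pos_left (by exact_mod_cast strictMono_nth_isSum2Sq hab) (by positivity)

lemma tendsto_nseq_atTop : Tendsto nseq atTop atTop :=
  (tendsto_natCast_atTop_atTop.comp strictMono_nth_isSum2Sq.tendsto_atTop).const_mul_atTop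
    (by positivity)

lemma tendsto_sub_rpow_atTop {δ : ℝ} (hδ : δ < 1) :
    Tendsto (fun x : ℝ => x - x ^ δ) atTop atTop := by
  have h : Tendsto (fun x : ℝ => x * (1 - x ^ (-(1 - δ)))) atTop atTop :=
    tendsto_id.atTop_mul_pos one_pos (by
      simpa using tendsto_const_nhds.sub (tendsto_rpow_neg_atTop (sub_pos.2 hδ)))
  refine h.congr' (eventually_gt_atTop 0 |>.mono fun x hx => ?_)
  have hpow : x ^ δ = x ^ (-(1 - δ)) * x := by rw [← Real.rpow_add_one hx.ne']; ring_nf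
  simp only [hpow]
  ring

lemma tendsto_div_of_abs_sub_le {a S η : ℕ → ℝ} (hη : Tendsto η atTop (nhds 0))
    (h : ∀ᶠ k in atTop, |a k - S k| ≤ η k * S k) (hS : ∀ᶠ k in atTop, 0 < S k) :
    Tendsto (fun k => a k / S k) atTop (nhds 1) := by
  rw [tendsto_iff_norm_sub_tendsto_zero]
  refine squeeze_zero' (Eventually.of_forall fun _ => norm_nonneg _) ?_ hη
  filter_upwards [h, hS] with k hk hSk
  rw [Real.norm_eq_abs, div_sub_one hSk.ne', abs_div, abs_of_pos hSk, div_le_iff₀ hSk]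
  exact hk

lemma tendsto_div_div_of_abs_sub_le {a S b w η : ℕ → ℝ} (hη : Tendsto η atTop (nhds 0))
    (ha : ∀ᶠ k in atTop, |a k - S k| ≤ η k * S k) (hb : ∀ᶠ k in atTop, |b k - w k| ≤ η k * w k)
    (hS : ∀ᶠ k in atTop, 0 < S k) (hw : ∀ᶠ k in atTop, 0 < w k) :
    Tendsto (fun k => a k / b k / ((w k)⁻¹ * S k)) atTop (nhds 1) := by
  have h := (tendsto_div_of_abs_sub_le hη ha hS).div (tendsto_div_of_abs_sub_le hη hb hw)
    one_ne_zero
  rw [div_one] at h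
  refine h.congr fun k => ?_
  simp only [Pi.div_apply, div_div]
  ring

theorem expectation_asymptotics_general {N : ℕ}
    (dd : Fin N → ((Fin N → T2) → ℂ)) (hmeas : ∀ j, Measurable (dd j))
    (hnorm : ∀ x, ∑ j, ‖dd j x‖ ^ 2 = 1)
    (δ : ℝ) (hδ : δ ∈ Set.Ioo (θH / 2) (1/2 - θH))
    (ζ : Fin 2 → ℤ)
    (ξ₀ : ℕ → Fin 2 → ℤ) (hξ₀ : ∀ k : ℕ, 1 ≤ k → qf (ξ₀ k) = nseq (k - 1)) :
    ∃ η : ℕ → ℝ, Tendsto η atTop (nhds 0) ∧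
      (∀ k : ℕ, 1 ≤ k →
        |(∫ x : Fin N → T2, Afun dd ζ (nseq k) (nseq (k + 1)) ((nseq k) ^ δ) x)
            - SigmaSum ζ (nseq k) (nseq (k + 1)) ((nseq k) ^ δ)|
          ≤ η k * SigmaSum ζ (nseq k) (nseq (k + 1)) ((nseq k) ^ δ) ∧
        |(∫ x : Fin N → T2, Bfun dd (ξ₀ k) (nseq (k + 1)) (nseq (k - 1)) x)
            - ((nseq (k + 1) - nseq (k - 1)) ^ 2)⁻¹|
          ≤ η k * ((nseq (k + 1) - nseq (k - 1)) ^ 2)⁻¹) ∧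
      ((∀ᶠ k : ℕ in atTop, 0 < SigmaSum ζ (nseq k) (nseq (k + 1)) ((nseq k) ^ δ)) →
        Tendsto (fun k : ℕ =>
          ((∫ x : Fin N → T2, Afun dd ζ (nseq k) (nseq (k + 1)) ((nseq k) ^ δ) x)
            / (∫ x : Fin N → T2, Bfun dd (ξ₀ k) (nseq (k + 1)) (nseq (k - 1)) x))
          / ((nseq (k + 1) - nseq (k - 1)) ^ 2
              * SigmaSum ζ (nseq k) (nseq (k + 1)) ((nseq k) ^ δ)))
          atTop (nhds 1)) := by
  have hf : Tendsto (fun ξ => dsumMeanSq dd ξ - 1) cofinite (nhds 0) := by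
    simpa using (tendsto_dsumMeanSq hmeas hnorm).sub_const 1
  -- every frequency entering at step `k` has `4π²|ξ|² ≥ t k`
  set t : ℕ → ℝ := fun k => min (nseq k - nseq k ^ δ) (nseq (k - 1))
  have ht : Tendsto t atTop atTop := tendsto_inf_atTop _
    ((tendsto_sub_rpow_atTop (by linarith [hδ.2, show 0 < θH by norm_num [θH]])).comp
      tendsto_nseq_atTop) (tendsto_nseq_atTop.comp (tendsto_sub_atTop_nat 1))
  set η : ℕ → ℝ := fun k => tailSup (fun ξ => dsumMeanSq dd ξ - 1) qf (t k)
  have hη : Tendsto η atTop (nhds 0) := (tendsto_tailSup_atTop hf qf).comp ht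
  have hA := fun k => abs_integral_afun_sub_sigmaSum_le hmeas hnorm ζ (nk := nseq k)
    (nk1 := nseq (k + 1)) (L0 := nseq k ^ δ) (η := η k) fun ξ hξ => abs_le_tailSup hf qf
      ((min_le_left _ _).trans (by linarith [(abs_le.1 (mem_annulus.1 hξ)).1]))
  have hB := fun k (hk : 1 ≤ k) => abs_integral_bfun_sub_le (dd := dd) (ξ₀ := ξ₀ k)
    (nk1 := nseq (k + 1)) (nkm1 := nseq (k - 1)) (η := η k)
      (abs_le_tailSup hf qf ((min_le_right _ _).trans (hξ₀ k hk).ge))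
  refine ⟨η, hη, fun k hk => ⟨hA k, hB k hk⟩, fun hpos => ?_⟩
  simpa only [inv_inv] using tendsto_div_div_of_abs_sub_le hη (.of_forall hA)
    ((eventually_ge_atTop 1).mono hB) hpos (.of_forall fun k => by
      have := nseq_strictMono (show k - 1 < k + 1 by omega)
      positivity)

/-- Asymptotics of the expectations of `𝒜_ζ^{(k)}` and `ℬ^{(k)}`, and of
their ratio. -/
theorem expectation_asymptotics {N : ℕ} (hN : 1 ≤ N)
    (dd : Fin N → ((Fin N → T2) → ℂ)) (hmeas : ∀ j, Measurable (dd j))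
    (hnorm : ∀ x, ∑ j, ‖dd j x‖ ^ 2 = 1)
    (δ : ℝ) (hδ : δ ∈ Set.Ioo (θH / 2) (1/2 - θH))
    (ζ : Fin 2 → ℤ)
    (ξ₀ : ℕ → Fin 2 → ℤ) (hξ₀ : ∀ k : ℕ, 1 ≤ k → qf (ξ₀ k) = nseq (k - 1)) :
    ∃ η : ℕ → ℝ, Tendsto η atTop (nhds 0) ∧
      (∀ k : ℕ, 1 ≤ k →
        |(∫ x : Fin N → T2, Afun dd ζ (nseq k) (nseq (k + 1)) ((nseq k) ^ δ) x)
            - SigmaSum ζ (nseq k) (nseq (k + 1)) ((nseq k) ^ δ)|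
          ≤ η k * SigmaSum ζ (nseq k) (nseq (k + 1)) ((nseq k) ^ δ) ∧
        |(∫ x : Fin N → T2, Bfun dd (ξ₀ k) (nseq (k + 1)) (nseq (k - 1)) x)
            - ((nseq (k + 1) - nseq (k - 1)) ^ 2)⁻¹|
          ≤ η k * ((nseq (k + 1) - nseq (k - 1)) ^ 2)⁻¹) ∧
      ((∀ᶠ k : ℕ in atTop, 0 < SigmaSum ζ (nseq k) (nseq (k + 1)) ((nseq k) ^ δ)) →
        Tendsto (fun k : ℕ =>
          ((∫ x : Fin N → T2, Afun dd ζ (nseq k) (nseq (k + 1)) ((nseq k) ^ δ) x)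
            / (∫ x : Fin N → T2, Bfun dd (ξ₀ k) (nseq (k + 1)) (nseq (k - 1)) x))
          / ((nseq (k + 1) - nseq (k - 1)) ^ 2
              * SigmaSum ζ (nseq k) (nseq (k + 1)) ((nseq k) ^ δ)))
          atTop (nhds 1)) :=
  expectation_asymptotics_general dd hmeas hnorm δ hδ ζ ξ₀ hξ₀
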